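/- Let μ ≥ 0, L > 0, and let f : V → ℝ be differentiable, μ-convex, with L-Lipschitz gradient and global minimizer x*. Let γ₀ > 0, x₀, v₀ ∈ V, and generate sequences by: α_k > 0 with Lα_k² = γ_k(2 + α_k), β_k = 1/(Lα_k), (y_k - x_k)/α_k = v_k - y_k - β_k∇f(x_k), (v_{k+1} - v_k)/α_k = (μ/γ_k)(y_k - v_{k+1}) - (1/γ_k)∇f(y_k), (γ_{k+1} - γ_k)/α_k = μ - γ_{k+1}, x_{k+1} = y_k - (1/L)∇f(y_k). Define λ₀ = 1, λ_k = ∏_{i=0}^{k-1} 1/(1+α_i), L_k = f(x_k) - f(x*) + (γ_k/2)‖v_k - x*‖², R₀ = 0, R_k = (λ_k/2)·∑_{i=0}^{k-1} (α_iβ_i/λ_i)‖∇f(x_i)‖², and E_k = L_k + R_k. Then for every k ≥ 0, E_{k+1} ≤ E_k/(1 + α_k). -/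

import Mathlib

open scoped RealInnerProductSpace

/-! The gradient step `x_{k+1} = y_k - ∇f(y_k)/L` decreases `f` by `‖∇f(y_k)‖²/(2L)`; the
interpolation inequality of convex `L`-smooth functions between `y_k` and `x_k` and `μ`-convexity
between `y_k` and `x*` bound `f(y_k)`. The implicit `v`-update turns the change of
`γ‖v - x*‖²/2` into an exact three-point identity, whose cross term
`α_k ⟪∇f(y_k), v_k - v_{k+1}⟫` is absorbed by Young's inequality exactly because
`Lα_k² ≤ γ_k(2 + α_k)`. What is left is `(1 + α_k) L_{k+1} + ‖∇f(x_k)‖²/(2L) ≤ L_k`, and since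
`α_k β_k = 1/L` the surplus `‖∇f(x_k)‖²/(2L)` is exactly the new term of `(1 + α_k) R_{k+1}`. -/

section SmoothFunction

variable {V : Type*} [NormedAddCommGroup V] [InnerProductSpace ℝ V] [CompleteSpace V]
  {L : ℝ} {f : V → ℝ} {f' : V → V}

theorem le_add_inner_add_sq_of_lipschitz_gradient (hdiff : ∀ z, HasGradientAt f (f' z) z)
    (hlip : ∀ z w : V, ‖f' z - f' w‖ ≤ L * ‖z - w‖) (z w : V) :
    f w ≤ f z + ⟪f' z, w - z⟫ + L / 2 * ‖w - z‖ ^ 2 := by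
  set d := w - z
  -- `ψ` has derivative `⟪f' (z + t • d) - f' z, d⟫ - L t ‖d‖² ≤ 0` on `[0, 1]`.
  set ψ : ℝ → ℝ := fun t => f (z + t • d) - t * ⟪f' z, d⟫ - L / 2 * t ^ 2 * ‖d‖ ^ 2 with hψ
  have hderiv (t : ℝ) :
      HasDerivAt ψ (⟪f' (z + t • d), d⟫ - ⟪f' z, d⟫ - L / 2 * (2 * t) * ‖d‖ ^ 2) t := by
    have hline : HasDerivAt (fun t : ℝ => z + t • d) d t := by
      simpa using ((hasDerivAt_id t).smul_const d).const_add z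
    have hf := (hdiff (z + t • d)).hasFDerivAt.comp_hasDerivAt t hline
    simp only [InnerProductSpace.toDual_apply_apply] at hf
    exact (hf.sub ((hasDerivAt_id t).mul_const _ |>.congr_deriv (one_mul _))).sub
      (((hasDerivAt_pow 2 t).const_mul (L / 2)).mul_const _ |>.congr_deriv (by ring))
  have hψdiff : Differentiable ℝ ψ := fun t => (hderiv t).differentiableAt
  have hanti : AntitoneOn ψ (Set.Icc 0 1) := by
    refine antitoneOn_of_deriv_nonpos (convex_Icc 0 1) hψdiff.continuous.continuousOn
      hψdiff.differentiableOn fun t ht => ?_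
    rw [interior_Icc] at ht
    have hinner : ⟪f' (z + t • d) - f' z, d⟫ ≤ L * t * ‖d‖ ^ 2 :=
      calc ⟪f' (z + t • d) - f' z, d⟫ ≤ ‖f' (z + t • d) - f' z‖ * ‖d‖ := real_inner_le_norm _ _
        _ ≤ L * ‖t • d‖ * ‖d‖ := by
          gcongr
          simpa using hlip (z + t • d) z
        _ = L * t * ‖d‖ ^ 2 := by rw [norm_smul, Real.norm_of_nonneg ht.1.le]; ring
    rw [(hderiv t).deriv]
    rw [inner_sub_left] at hinner
    linarith
  have h01 : ψ 1 ≤ ψ 0 := hanti (by norm_num) (by norm_num) zero_le_one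
  simp only [hψ, one_smul, zero_smul, add_zero, one_pow, one_mul, zero_pow two_ne_zero,
    mul_zero, zero_mul, sub_zero, add_sub_cancel, d] at h01
  linarith

theorem le_sub_sq_norm_of_gradient_step (hL : 0 < L) (hdiff : ∀ z, HasGradientAt f (f' z) z)
    (hlip : ∀ z w : V, ‖f' z - f' w‖ ≤ L * ‖z - w‖) (z : V) :
    f (z - L⁻¹ • f' z) ≤ f z - (2 * L)⁻¹ * ‖f' z‖ ^ 2 := by
  have h := le_add_inner_add_sq_of_lipschitz_gradient hdiff hlip z (z - L⁻¹ • f' z)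
  rw [sub_sub_cancel_left, inner_neg_right, norm_neg, real_inner_smul_right,
    real_inner_self_eq_norm_sq, norm_smul, Real.norm_of_nonneg (inv_nonneg.2 hL.le)] at h
  convert h using 1
  field_simp
  ring

theorem le_sub_inner_sub_sq_norm_gradient_sub (hL : 0 < L)
    (hdiff : ∀ z, HasGradientAt f (f' z) z) (hconvex : ∀ z w : V, 0 ≤ f z - f w - ⟪f' w, z - w⟫)
    (hlip : ∀ z w : V, ‖f' z - f' w‖ ≤ L * ‖z - w‖) (a b : V) :
    f a ≤ f b - ⟪f' a, b - a⟫ - (2 * L)⁻¹ * ‖f' b - f' a‖ ^ 2 := by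
  -- Bound `f w` below by convexity at `a` and above by the descent lemma at `b`.
  set g := f' b - f' a
  set w := b - L⁻¹ • g
  have hlower := hconvex w a
  have hupper := le_add_inner_add_sq_of_lipschitz_gradient hdiff hlip b w
  have hwb : w - b = -(L⁻¹ • g) := by simp [w]
  have hwa : w - a = (b - a) - L⁻¹ • g := by simp only [w]; abel
  rw [hwb, inner_neg_right, norm_neg, real_inner_smul_right, norm_smul,
    Real.norm_of_nonneg (inv_nonneg.2 hL.le)] at hupper
  rw [hwa, inner_sub_right, real_inner_smul_right] at hlower
  have hg : ⟪f' b, g⟫ - ⟪f' a, g⟫ = ‖g‖ ^ 2 := by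
    rw [← inner_sub_left, real_inner_self_eq_norm_sq]
  have hquad : L / 2 * (L⁻¹ * ‖g‖) ^ 2 = (2 * L)⁻¹ * ‖g‖ ^ 2 := by field_simp
  have hlin : L⁻¹ * ⟪f' b, g⟫ - L⁻¹ * ⟪f' a, g⟫ = 2 * ((2 * L)⁻¹ * ‖g‖ ^ 2) := by
    rw [← mul_sub, hg]; field_simp
  linarith

end SmoothFunction

theorem weighted_sq_norm_sub_eq_of_implicit_step {V : Type*} [NormedAddCommGroup V]
    [InnerProductSpace ℝ V] {γ α μ : ℝ} {v v' y g : V}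
    (hv : γ • (v' - v) = (α * μ) • (y - v') - α • g) (s : V) :
    (γ + α * μ) / 2 * ‖v' - s‖ ^ 2 - γ / 2 * ‖v - s‖ ^ 2
      = α * μ / 2 * ‖y - s‖ ^ 2 - α * μ / 2 * ‖y - v'‖ ^ 2 - α * ⟪g, v' - s⟫
        - γ / 2 * ‖v' - v‖ ^ 2 := by
  have hinner := congrArg (fun u => ⟪u, v' - s⟫) hv
  simp only [inner_sub_left ((α * μ) • (y - v')), real_inner_smul_left] at hinner
  have hv_s : ‖v - s‖ ^ 2 = ‖v' - s‖ ^ 2 - 2 * ⟪v' - s, v' - v⟫ + ‖v' - v‖ ^ 2 := by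
    rw [← norm_sub_sq_real, sub_sub_sub_cancel_left]
  have hy_s : ‖y - s‖ ^ 2 = ‖y - v'‖ ^ 2 + 2 * ⟪y - v', v' - s⟫ + ‖v' - s‖ ^ 2 := by
    rw [← norm_add_sq_real, sub_add_sub_cancel]
  rw [real_inner_comm (v' - v) (v' - s)] at hv_s
  linear_combination (-γ / 2) * hv_s - (α * μ / 2) * hy_s + hinner

section HNAGStep

variable {V : Type*} [NormedAddCommGroup V] [InnerProductSpace ℝ V] [CompleteSpace V]
  {μ L : ℝ} {f : V → ℝ} {f' : V → V}

noncomputable def hnagLyapunov (f : V → ℝ) (s : V) (γ : ℝ) (x v : V) : ℝ :=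
  f x - f s + γ / 2 * ‖v - s‖ ^ 2

theorem hnagLyapunov_step (hμ : 0 ≤ μ) (hL : 0 < L) (hdiff : ∀ z, HasGradientAt f (f' z) z)
    (hconv : ∀ z w : V, f z - f w - ⟪f' w, z - w⟫ ≥ μ / 2 * ‖z - w‖ ^ 2)
    (hlip : ∀ z w : V, ‖f' z - f' w‖ ≤ L * ‖z - w‖)
    {γ γ' α : ℝ} {x y v x' v' : V} (hγ : 0 < γ) (hα : 0 < α)
    (hαγ : L * α ^ 2 ≤ γ * (2 + α))
    (hy : y - x = α • (v - y) - L⁻¹ • f' x)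
    (hv : γ • (v' - v) = (α * μ) • (y - v') - α • f' y)
    (hγ' : γ' * (1 + α) = γ + α * μ)
    (hx' : x' = y - L⁻¹ • f' y) (s : V) :
    (1 + α) * hnagLyapunov f s γ' x' v' + (2 * L)⁻¹ * ‖f' x‖ ^ 2
      ≤ hnagLyapunov f s γ x v := by
  have hconvex (z w : V) : 0 ≤ f z - f w - ⟪f' w, z - w⟫ :=
    (mul_nonneg (div_nonneg hμ two_pos.le) (sq_nonneg _)).trans (hconv z w)
  have hdesc := le_sub_sq_norm_of_gradient_step hL hdiff hlip y
  have hinterp := le_sub_inner_sub_sq_norm_gradient_sub hL hdiff hconvex hlip y x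
  have hstrong := hconv s y
  rw [norm_sub_rev] at hstrong
  have henergy := weighted_sq_norm_sub_eq_of_implicit_step hv s
  rw [← hx'] at hdesc
  -- Young's inequality absorbs the cross term `α ⟪f' y, v - v'⟫`.
  have hyoung : 2 * α * ⟪f' y, v - v'⟫ ≤ γ * ‖v - v'‖ ^ 2 + γ⁻¹ * (α * ‖f' y‖) ^ 2 :=
    calc 2 * α * ⟪f' y, v - v'⟫ ≤ 2 * ‖v - v'‖ * (α * ‖f' y‖) := by
          nlinarith [real_inner_le_norm (f' y) (v - v')]
      _ ≤ _ := two_mul_le_add_mul_sq hγ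
  have hcoef : γ⁻¹ * α ^ 2 ≤ (2 + α) * L⁻¹ := by
    rw [inv_mul_le_iff₀ hγ, ← div_eq_mul_inv, mul_div_assoc', le_div_iff₀ hL]
    linarith
  have hxy : ⟪f' y, x - y⟫ = -(α * ⟪f' y, v - y⟫) + L⁻¹ * ⟪f' x, f' y⟫ := by
    rw [← neg_sub, hy, inner_neg_right, inner_sub_right, real_inner_smul_right,
      real_inner_smul_right, real_inner_comm (f' x) (f' y)]
    ring
  have hvy : ⟪f' y, v - y⟫ = ⟪f' y, v - v'⟫ + ⟪f' y, v' - s⟫ + ⟪f' y, s - y⟫ := by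
    rw [← inner_add_right, ← inner_add_right]; congr 1; abel
  have hgrad : ‖f' x - f' y‖ ^ 2 = ‖f' x‖ ^ 2 - 2 * ⟪f' x, f' y⟫ + ‖f' y‖ ^ 2 :=
    norm_sub_sq_real _ _
  have hdamp : 0 ≤ α * μ / 2 * ‖y - v'‖ ^ 2 := by positivity
  rw [norm_sub_rev v' v] at henergy
  unfold hnagLyapunov
  linear_combination (1 + α) * hdesc + hinterp + α * hstrong + (‖v' - s‖ ^ 2 / 2) * hγ'
    + henergy - hxy + α * hvy - (2 * L)⁻¹ * hgrad + hyoung / 2 + (‖f' y‖ ^ 2 / 2) * hcoef + hdamp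

theorem mul_one_add_eq_of_sub_div_eq {γ γ' α : ℝ} (hα : 0 < α) (h : (γ' - γ) / α = μ - γ') :
    γ' * (1 + α) = γ + α * μ := by
  rw [div_eq_iff hα.ne'] at h
  linarith

theorem hnag_gamma_pos (hμ : 0 ≤ μ) {γ α : ℕ → ℝ} (hγ0 : 0 < γ 0) (hα : ∀ k, 0 < α k)
    (hγ : ∀ k, (γ (k + 1) - γ k) / α k = μ - γ (k + 1)) (k : ℕ) : 0 < γ k := by
  induction k with
  | zero => exact hγ0
  | succ k ih =>
    have hα := hα k
    rw [eq_div_of_mul_eq (by positivity) (mul_one_add_eq_of_sub_div_eq hα (hγ k))]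
    have := mul_nonneg hα.le hμ
    positivity

theorem hnag_residual_succ_mul {α lam : ℕ → ℝ} (hα : ∀ k, 1 + α k ≠ 0)
    (hlam : ∀ k, lam k = ∏ i ∈ Finset.range k, (1 + α i)⁻¹) (a b : ℕ → ℝ) (k : ℕ) :
    lam (k + 1) / 2 * (∑ i ∈ Finset.range (k + 1), a i / lam i * b i) * (1 + α k)
      = lam k / 2 * ∑ i ∈ Finset.range k, a i / lam i * b i + a k * b k / 2 := by
  have hlam_ne : lam k ≠ 0 := by
    rw [hlam]
    exact Finset.prod_ne_zero_iff.2 fun i _ => inv_ne_zero (hα i)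
  have hlam_succ : lam (k + 1) * (1 + α k) = lam k := by
    rw [hlam, hlam, Finset.prod_range_succ, mul_assoc, inv_mul_cancel₀ (hα k), mul_one]
  rw [mul_right_comm, div_mul_eq_mul_div, hlam_succ, Finset.sum_range_succ]
  field_simp

end HNAGStep

theorem extra_gradient_hnag_energy_contraction_general
    {V : Type*} [NormedAddCommGroup V] [InnerProductSpace ℝ V] [CompleteSpace V]
    (μ L : ℝ) (hμ : 0 ≤ μ) (hL : 0 < L) (f : V → ℝ) (f' : V → V)
    (hdiff : ∀ z, HasGradientAt f (f' z) z)
    (hconv : ∀ z w : V, f z - f w - ⟪f' w, z - w⟫ ≥ μ / 2 * ‖z - w‖ ^ 2)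
    (hlip : ∀ z w : V, ‖f' z - f' w‖ ≤ L * ‖z - w‖)
    (xstar : V)
    (x v y : ℕ → V) (γ α β lam : ℕ → ℝ) (hγ0 : 0 < γ 0)
    (hαpos : ∀ k, 0 < α k) (hαdef : ∀ k, L * (α k) ^ 2 = γ k * (2 + α k))
    (hβ : ∀ k, β k = 1 / (L * α k))
    (h1 : ∀ k, (α k)⁻¹ • (y k - x k) = v k - y k - β k • f' (x k))
    (h2 : ∀ k, (α k)⁻¹ • (v (k + 1) - v k)
        = (μ / γ k) • (y k - v (k + 1)) - (1 / γ k) • f' (y k))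
    (h3 : ∀ k, (γ (k + 1) - γ k) / α k = μ - γ (k + 1))
    (h4 : ∀ k, x (k + 1) = y k - (1 / L) • f' (y k))
    (hlam : ∀ k, lam k = ∏ i ∈ Finset.range k, (1 + α i)⁻¹)
    (k : ℕ) :
    ((f (x (k + 1)) - f xstar + γ (k + 1) / 2 * ‖v (k + 1) - xstar‖ ^ 2)
        + lam (k + 1) / 2 * ∑ i ∈ Finset.range (k + 1),
            (α i * β i / lam i) * ‖f' (x i)‖ ^ 2)
      ≤ ((f (x k) - f xstar + γ k / 2 * ‖v k - xstar‖ ^ 2)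
          + lam k / 2 * ∑ i ∈ Finset.range k,
              (α i * β i / lam i) * ‖f' (x i)‖ ^ 2) / (1 + α k) := by
  have hα := hαpos k
  have hγ := hnag_gamma_pos hμ hγ0 hαpos h3 k
  have hαβ : α k * β k = L⁻¹ := by rw [hβ]; field_simp
  have hy : y k - x k = α k • (v k - y k) - L⁻¹ • f' (x k) := by
    rw [(inv_smul_eq_iff₀ hα.ne').1 (h1 k), smul_sub, smul_smul, hαβ]
  have hv : γ k • (v (k + 1) - v k) = (α k * μ) • (y k - v (k + 1)) - α k • f' (y k) := by
    rw [(inv_smul_eq_iff₀ hα.ne').1 (h2 k), smul_smul, smul_sub, smul_smul, smul_smul]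
    congr 2 <;> field_simp
  have hstep := hnagLyapunov_step hμ hL hdiff hconv hlip hγ hα (hαdef k).le hy hv
    (mul_one_add_eq_of_sub_div_eq hα (h3 k)) ((h4 k).trans (by rw [one_div])) xstar
  rw [le_div_iff₀ (by linarith), add_mul, hnag_residual_succ_mul (fun i => by linarith [hαpos i])
    hlam, hαβ]
  unfold hnagLyapunov at hstep
  linear_combination hstep

/-- One-step contraction `E_{k+1} ≤ E_k/(1+α_k)` for the explicit HNAG scheme
with one extra gradient step (Algorithm 3), where `Lα_k² = γ_k(2+α_k)`,
`β_k = 1/(Lα_k)`, `E_k = L_k + R_k`,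
`L_k = f(x_k) - f(x*) + (γ_k/2)‖v_k - x*‖²` and
`R_k = (λ_k/2)∑_{i<k} (α_iβ_i/λ_i)‖∇f(x_i)‖²`. -/
theorem extra_gradient_hnag_energy_contraction
    {V : Type*} [NormedAddCommGroup V] [InnerProductSpace ℝ V] [CompleteSpace V]
    (μ L : ℝ) (hμ : 0 ≤ μ) (hL : 0 < L) (f : V → ℝ) (f' : V → V)
    (hdiff : ∀ z, HasGradientAt f (f' z) z)
    (hconv : ∀ z w : V, f z - f w - ⟪f' w, z - w⟫ ≥ μ / 2 * ‖z - w‖ ^ 2)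
    (hlip : ∀ z w : V, ‖f' z - f' w‖ ≤ L * ‖z - w‖)
    (xstar : V) (hmin : ∀ z, f xstar ≤ f z)
    (x v y : ℕ → V) (γ α β lam : ℕ → ℝ) (hγ0 : 0 < γ 0)
    (hαpos : ∀ k, 0 < α k) (hαdef : ∀ k, L * (α k) ^ 2 = γ k * (2 + α k))
    (hβ : ∀ k, β k = 1 / (L * α k))
    (h1 : ∀ k, (α k)⁻¹ • (y k - x k) = v k - y k - β k • f' (x k))
    (h2 : ∀ k, (α k)⁻¹ • (v (k + 1) - v k)
        = (μ / γ k) • (y k - v (k + 1)) - (1 / γ k) • f' (y k))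
    (h3 : ∀ k, (γ (k + 1) - γ k) / α k = μ - γ (k + 1))
    (h4 : ∀ k, x (k + 1) = y k - (1 / L) • f' (y k))
    (hlam : ∀ k, lam k = ∏ i ∈ Finset.range k, (1 + α i)⁻¹)
    (k : ℕ) :
    ((f (x (k + 1)) - f xstar + γ (k + 1) / 2 * ‖v (k + 1) - xstar‖ ^ 2)
        + lam (k + 1) / 2 * ∑ i ∈ Finset.range (k + 1),
            (α i * β i / lam i) * ‖f' (x i)‖ ^ 2)
      ≤ ((f (x k) - f xstar + γ k / 2 * ‖v k - xstar‖ ^ 2)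
          + lam k / 2 * ∑ i ∈ Finset.range k,
              (α i * β i / lam i) * ‖f' (x i)‖ ^ 2) / (1 + α k) :=
  extra_gradient_hnag_energy_contraction_general μ L hμ hL f f' hdiff hconv hlip xstar x v y γ α β
    lam hγ0 hαpos hαdef hβ h1 h2 h3 h4 hlam k
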